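/- arXiv:2312.06248 — 10 statements merged into one kernel-verified Lean document; each statement's English description precedes it below -/
import Mathlib

section
/- The only integer contained in F is 1; that is, φ(0) = 1, and for every p : ℕ, if the real number φ(p) is an integer then p = 0 (hence φ(p) = 1). -/
theorem Nat.dvd_of_cast_div_eq_intCast {m q : ℕ} (hq : q ≠ 0) {n : ℤ}
    (h : (m : ℝ) / q = n) : q ∣ m := by
  have hmq : (m : ℝ) = n * q := by
    rw [← h, div_mul_cancel₀]
    exact_mod_cast hq
  have hmqZ : (m : ℤ) = n * q := by exact_mod_cast hmq
  exact Int.natCast_dvd_natCast.mp ⟨n, by rw [hmqZ, mul_comm]⟩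

theorem stmt_0_general (a b : ℕ) (ha : 1 < a) (hab : a < b) (hcop : Nat.Coprime a b)
    (d : ℕ → ℕ) (hd : ∀ p : ℕ, IsLeast {k : ℕ | b ^ p ≤ a ^ (p + k)} (d p))
    (φ : ℕ → ℝ) (hφ : ∀ p : ℕ, φ p = (a : ℝ) ^ (p + d p) / (b : ℝ) ^ p) :
    φ 0 = 1 ∧ ∀ p : ℕ, (∃ n : ℤ, φ p = (n : ℝ)) → p = 0 ∧ φ p = 1 := by
  have hd0 : d 0 = 0 := Nat.le_zero.mp ((hd 0).2 (by simp))
  have hφ0 : φ 0 = 1 := by rw [hφ 0, hd0]; norm_num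
  refine ⟨hφ0, fun p ⟨n, hn⟩ => ?_⟩
  have hdvd : b ^ p ∣ a ^ (p + d p) := by
    refine Nat.dvd_of_cast_div_eq_intCast (pow_ne_zero p (by omega)) (n := n) ?_
    push_cast
    rw [← hφ, hn]
  have hbp : b ^ p = 1 := (Nat.Coprime.pow p _ hcop.symm).eq_one_of_dvd hdvd
  have hp0 : p = 0 := (Nat.pow_eq_one.mp hbp).resolve_left (by omega)
  exact ⟨hp0, hp0 ▸ hφ0⟩

theorem stmt_0 (a b : ℕ) (ha : 1 < a) (hab : a < b) (hcop : Nat.Coprime a b)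
    (d : ℕ → ℕ) (hd : ∀ p : ℕ, IsLeast {k : ℕ | b ^ p ≤ a ^ (p + k)} (d p))
    (φ : ℕ → ℝ) (hφ : ∀ p : ℕ, φ p = (a : ℝ) ^ (p + d p) / (b : ℝ) ^ p)
    (F : Set ℝ) (hF : F = Set.range φ) :
    φ 0 = 1 ∧ ∀ p : ℕ, (∃ n : ℤ, φ p = (n : ℝ)) → p = 0 ∧ φ p = 1 :=
  stmt_0_general a b ha hab hcop d hd φ hφ
end

section
/- For all natural numbers p₁ and p₂, φ(p₁) = φ(p₂) if and only if p₁ = p₂; in other words, the map φ : ℕ → ℝ is injective. -/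
theorem Nat.Coprime.eq_of_pow_mul_pow_eq {a b m n p q : ℕ} (hab : Nat.Coprime a b) (hb : 1 < b)
    (h : a ^ m * b ^ q = a ^ n * b ^ p) : p = q := by
  have hpq : b ^ p ∣ b ^ q :=
    (hab.symm.pow p m).dvd_of_dvd_mul_left (h ▸ Dvd.intro_left _ rfl)
  have hqp : b ^ q ∣ b ^ p :=
    (hab.symm.pow q n).dvd_of_dvd_mul_left (h.symm ▸ Dvd.intro_left _ rfl)
  exact Nat.pow_right_injective hb (Nat.dvd_antisymm hpq hqp)

theorem Nat.Coprime.eq_of_cast_pow_div_pow_eq {a b m n p q : ℕ} (hab : Nat.Coprime a b)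
    (hb : 1 < b) (h : (a : ℝ) ^ m / (b : ℝ) ^ p = (a : ℝ) ^ n / (b : ℝ) ^ q) : p = q := by
  have hb₀ : (b : ℝ) ≠ 0 := by positivity
  rw [div_eq_div_iff (pow_ne_zero _ hb₀) (pow_ne_zero _ hb₀)] at h
  exact hab.eq_of_pow_mul_pow_eq hb (by exact_mod_cast h)

theorem stmt_1_general (a b : ℕ) (ha : 1 < a) (hab : a < b) (hcop : Nat.Coprime a b)
    (d : ℕ → ℕ)
    (φ : ℕ → ℝ) (hφ : ∀ p : ℕ, φ p = (a : ℝ) ^ (p + d p) / (b : ℝ) ^ p) :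
    (∀ p₁ p₂ : ℕ, φ p₁ = φ p₂ ↔ p₁ = p₂) ∧ Function.Injective φ := by
  have hinj : Function.Injective φ := fun p₁ p₂ h =>
    hcop.eq_of_cast_pow_div_pow_eq (ha.trans hab) (by rwa [hφ, hφ] at h)
  exact ⟨fun _ _ => hinj.eq_iff, hinj⟩

theorem stmt_1 (a b : ℕ) (ha : 1 < a) (hab : a < b) (hcop : Nat.Coprime a b)
    (d : ℕ → ℕ) (hd : ∀ p : ℕ, IsLeast {k : ℕ | b ^ p ≤ a ^ (p + k)} (d p))
    (φ : ℕ → ℝ) (hφ : ∀ p : ℕ, φ p = (a : ℝ) ^ (p + d p) / (b : ℝ) ^ p) :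
    (∀ p₁ p₂ : ℕ, φ p₁ = φ p₂ ↔ p₁ = p₂) ∧ Function.Injective φ :=
  stmt_1_general a b ha hab hcop d φ hφ
end

section
/- The map φ : ℕ → F is a bijection from ℕ onto F; in particular, F is a countably infinite set. -/
/-! If `φ p = φ q`, clearing denominators gives `a ^ m * b ^ q = a ^ n * b ^ p` in `ℕ`. For `p ≤ q`
this leaves `b ^ (q - p) ∣ a ^ n`, and as `b > 1` is coprime to `a` this forces `q = p`.
So `φ` is injective, and `F` is its range. -/

theorem Nat.eq_of_pow_mul_pow_eq_pow_mul_pow_of_le {a b m n p q : ℕ} (hab : a.Coprime b)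
    (hb : 1 < b) (hpq : p ≤ q) (h : a ^ m * b ^ q = a ^ n * b ^ p) : q = p := by
  have hsplit : b ^ q = b ^ (q - p) * b ^ p := by rw [← pow_add, Nat.sub_add_cancel hpq]
  rw [hsplit, ← mul_assoc] at h
  have hcancel : a ^ m * b ^ (q - p) = a ^ n :=
    Nat.eq_of_mul_eq_mul_right (pow_pos (by omega) p) h
  have hdvd : b ^ (q - p) ∣ a ^ n := ⟨a ^ m, by rw [← hcancel, mul_comm]⟩
  have hone : b ^ (q - p) = 1 := (Nat.Coprime.pow _ _ hab.symm).eq_one_of_dvd hdvd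
  rcases Nat.pow_eq_one.mp hone with hb1 | hqp <;> omega

theorem Nat.eq_of_pow_mul_pow_eq_pow_mul_pow {a b m n p q : ℕ} (hab : a.Coprime b)
    (hb : 1 < b) (h : a ^ m * b ^ q = a ^ n * b ^ p) : q = p := by
  rcases le_total p q with hpq | hqp
  · exact Nat.eq_of_pow_mul_pow_eq_pow_mul_pow_of_le hab hb hpq h
  · exact (Nat.eq_of_pow_mul_pow_eq_pow_mul_pow_of_le hab hb hqp h.symm).symm

theorem injective_pow_div_pow {a b : ℕ} (hab : a.Coprime b) (hb : 1 < b) (e : ℕ → ℕ) :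
    Function.Injective fun p => (a : ℝ) ^ e p / (b : ℝ) ^ p := by
  intro p q h
  have hbpow : ∀ k : ℕ, (b : ℝ) ^ k ≠ 0 := fun k => pow_ne_zero k (by positivity)
  rw [div_eq_div_iff (hbpow p) (hbpow q)] at h
  exact (Nat.eq_of_pow_mul_pow_eq_pow_mul_pow hab hb (by exact_mod_cast h)).symm

theorem stmt_2_general (a b : ℕ) (ha : 1 < a) (hab : a < b) (hcop : Nat.Coprime a b)
    (d : ℕ → ℕ)
    (φ : ℕ → ℝ) (hφ : ∀ p : ℕ, φ p = (a : ℝ) ^ (p + d p) / (b : ℝ) ^ p)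
    (F : Set ℝ) (hF : F = Set.range φ) :
    Set.BijOn φ Set.univ F ∧ F.Countable ∧ F.Infinite := by
  have hinj : Function.Injective φ := by
    rw [funext hφ]
    exact injective_pow_div_pow hcop (ha.trans hab) _
  subst hF
  refine ⟨?_, Set.countable_range φ, Set.infinite_range_of_injective hinj⟩
  simpa only [Set.image_univ] using (hinj.injOn (s := Set.univ)).bijOn_image

theorem stmt_2 (a b : ℕ) (ha : 1 < a) (hab : a < b) (hcop : Nat.Coprime a b)
    (d : ℕ → ℕ) (hd : ∀ p : ℕ, IsLeast {k : ℕ | b ^ p ≤ a ^ (p + k)} (d p))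
    (φ : ℕ → ℝ) (hφ : ∀ p : ℕ, φ p = (a : ℝ) ^ (p + d p) / (b : ℝ) ^ p)
    (F : Set ℝ) (hF : F = Set.range φ) :
    Set.BijOn φ Set.univ F ∧ F.Countable ∧ F.Infinite :=
  stmt_2_general a b ha hab hcop d φ hφ F hF
end

section
/- For all natural numbers p₁ and p₂: if φ(p₁) · φ(p₂) < a then φ(p₁ + p₂) = φ(p₁) · φ(p₂), while if a ≤ φ(p₁) · φ(p₂) then φ(p₁ + p₂) = (φ(p₁) · φ(p₂)) / a. -/
/-!
Since `a < b`, `d p` is pinned down by `b ^ p ≤ a ^ (p + d p) < a * b ^ p`. Multiplying these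
bounds for `p₁` and `p₂` puts `a ^ (p₁ + p₂ + d p₁ + d p₂)` in `[b ^ s, a² b ^ s)` with
`s = p₁ + p₂`; in the lower half `[b ^ s, a b ^ s)` this gives `d s = d p₁ + d p₂`, in the upper
half `d s = d p₁ + d p₂ - 1`, which is the dichotomy `φ₁ φ₂ < a` versus `a ≤ φ₁ φ₂`.
-/

open Set

namespace Nat

variable {a x y m n : ℕ}

theorem isLeast_pow_add_ge_iff (ha : 1 < a) (hx : a ^ m ≤ x) :
    IsLeast {k | x ≤ a ^ (m + k)} n ↔ a ^ (m + n) ∈ Ico x (a * x) := by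
  constructor
  · rintro ⟨hn, hmin⟩
    refine ⟨hn, ?_⟩
    rcases n with _ | n
    · exact hx.trans_lt (lt_mul_left (lt_of_lt_of_le (Nat.pow_pos (by omega)) hx) ha)
    · have hlt : a ^ (m + n) < x := by
        by_contra! h
        have := hmin h
        omega
      calc a ^ (m + (n + 1)) = a * a ^ (m + n) := by ring
        _ < a * x := Nat.mul_lt_mul_of_pos_left hlt (by omega)
  · rintro ⟨hle, hlt⟩
    refine ⟨hle, fun k (hk : x ≤ a ^ (m + k)) => ?_⟩
    by_contra! hkn
    have : a * x ≤ a ^ (m + n) :=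
      calc a * x ≤ a * a ^ (m + k) := Nat.mul_le_mul_left a hk
        _ = a ^ (m + k + 1) := by ring
        _ ≤ a ^ (m + n) := Nat.pow_le_pow_right (by omega) (by omega)
    omega

theorem pow_add_mem_Ico_mul (hm : a ^ m ∈ Ico x (a * x)) (hn : a ^ n ∈ Ico y (a * y)) :
    a ^ (m + n) ∈ Ico (x * y) (a * (a * (x * y))) := by
  rw [pow_add]
  refine ⟨Nat.mul_le_mul hm.1 hn.1, ?_⟩
  calc a ^ m * a ^ n < (a * x) * (a * y) := Nat.mul_lt_mul'' hm.2 hn.2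
    _ = a * (a * (x * y)) := by ring

theorem exists_pow_add_mem_Ico_of_mem_Ico_mul (ha : 1 < a) (hx : a ^ m ≤ x)
    (h : a ^ (m + n) ∈ Ico (a * x) (a * y)) : ∃ k, n = k + 1 ∧ a ^ (m + k) ∈ Ico x y := by
  rcases n with _ | k
  · have hx0 : 0 < x := lt_of_lt_of_le (Nat.pow_pos (by omega)) hx
    have : a * x ≤ x := h.1.trans hx
    nlinarith
  · rw [← add_assoc, pow_succ'] at h
    exact ⟨k, rfl, Nat.le_of_mul_le_mul_left h.1 (by omega), Nat.lt_of_mul_lt_mul_left h.2⟩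

end Nat

theorem stmt_4_general (a b : ℕ) (ha : 1 < a) (hab : a < b)
    (d : ℕ → ℕ) (hd : ∀ p : ℕ, IsLeast {k : ℕ | b ^ p ≤ a ^ (p + k)} (d p))
    (φ : ℕ → ℝ) (hφ : ∀ p : ℕ, φ p = (a : ℝ) ^ (p + d p) / (b : ℝ) ^ p) :
    ∀ p₁ p₂ : ℕ,
      (φ p₁ * φ p₂ < a → φ (p₁ + p₂) = φ p₁ * φ p₂) ∧
      ((a : ℝ) ≤ φ p₁ * φ p₂ → φ (p₁ + p₂) = (φ p₁ * φ p₂) / a) := by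
  intro p₁ p₂
  have hab_pow (p : ℕ) : a ^ p ≤ b ^ p := Nat.pow_le_pow_left hab.le p
  have hd_iff (p k : ℕ) : d p = k ↔ a ^ (p + k) ∈ Ico (b ^ p) (a * b ^ p) := by
    rw [← Nat.isLeast_pow_add_ge_iff ha (hab_pow p)]
    exact ⟨fun h => h ▸ hd p, (hd p).unique⟩
  set s := p₁ + p₂
  set D := d p₁ + d p₂
  have hexp : (p₁ + d p₁) + (p₂ + d p₂) = s + D := by omega
  have hmem : a ^ (s + D) ∈ Ico (b ^ s) (a * (a * b ^ s)) := by
    rw [← hexp, pow_add b]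
    exact Nat.pow_add_mem_Ico_mul ((hd_iff p₁ _).mp rfl) ((hd_iff p₂ _).mp rfl)
  have hprod : φ p₁ * φ p₂ = (a : ℝ) ^ (s + D) / (b : ℝ) ^ s := by
    rw [hφ, hφ, div_mul_div_comm, ← pow_add, ← pow_add, hexp]
  have hbs : (0 : ℝ) < (b : ℝ) ^ s := pow_pos (Nat.cast_pos.mpr (by omega)) s
  constructor
  · intro hlt
    rw [hprod, div_lt_iff₀ hbs] at hlt
    rw [hφ, (hd_iff s D).mpr ⟨hmem.1, by exact_mod_cast hlt⟩, hprod]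
  · intro hge
    rw [hprod, le_div_iff₀ hbs] at hge
    obtain ⟨k, hk, hmem'⟩ := Nat.exists_pow_add_mem_Ico_of_mem_Ico_mul ha (hab_pow s)
      ⟨by exact_mod_cast hge, hmem.2⟩
    rw [hφ, (hd_iff s k).mpr hmem', hprod, hk, ← add_assoc, pow_succ]
    field_simp

theorem stmt_4 (a b : ℕ) (ha : 1 < a) (hab : a < b) (hcop : Nat.Coprime a b)
    (d : ℕ → ℕ) (hd : ∀ p : ℕ, IsLeast {k : ℕ | b ^ p ≤ a ^ (p + k)} (d p))
    (φ : ℕ → ℝ) (hφ : ∀ p : ℕ, φ p = (a : ℝ) ^ (p + d p) / (b : ℝ) ^ p) :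
    ∀ p₁ p₂ : ℕ,
      (φ p₁ * φ p₂ < a → φ (p₁ + p₂) = φ p₁ * φ p₂) ∧
      ((a : ℝ) ≤ φ p₁ * φ p₂ → φ (p₁ + p₂) = (φ p₁ * φ p₂) / a) :=
  stmt_4_general a b ha hab d hd φ hφ
end

section
/- For all natural numbers p₁ and p₂: if φ(p₁) · φ(p₂) < a then d(p₁ + p₂) = d(p₁) + d(p₂), while if a ≤ φ(p₁) · φ(p₂) then d(p₁ + p₂) = d(p₁) + d(p₂) − 1. -/
/-!
Write `s = p₁ + p₂` and `n = d p₁ + d p₂`. The exponent `d p` is characterised by the bracket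
`b ^ p ≤ a ^ (p + d p) < a * b ^ p`, i.e. `1 ≤ φ p < a`. Multiplying the brackets for `p₁` and `p₂`
gives `b ^ s ≤ a ^ (s + n) < a² * b ^ s`, while `φ p₁ * φ p₂ = a ^ (s + n) / b ^ s`. If this product
is `< a`, the bracket for `s` holds with exponent `n`; otherwise it holds with exponent `n - 1`.
-/

section Bracket

variable {a b p d : ℕ}

theorem pow_add_lt_mul_pow_of_isLeast (ha : 1 < a) (hab : a ≤ b)
    (hd : IsLeast {k | b ^ p ≤ a ^ (p + k)} d) : a ^ (p + d) < a * b ^ p := by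
  rcases Nat.eq_zero_or_eq_succ_pred d with h0 | hsucc
  · rw [h0, add_zero]
    calc a ^ p ≤ b ^ p := Nat.pow_le_pow_left hab p
      _ < a * b ^ p := lt_mul_of_one_lt_left (Nat.pow_pos (by omega)) ha
  · have hpred : a ^ (p + d.pred) < b ^ p := by
      by_contra! h
      have := hd.2 h
      omega
    calc a ^ (p + d) = a * a ^ (p + d.pred) := by rw [← pow_succ', hsucc]; rfl
      _ < a * b ^ p := Nat.mul_lt_mul_of_pos_left hpred (by omega)

theorem eq_of_isLeast_of_pow_add_lt (ha : 0 < a) (hd : IsLeast {k | b ^ p ≤ a ^ (p + k)} d)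
    {k : ℕ} (hle : b ^ p ≤ a ^ (p + k)) (hlt : a ^ (p + k) < a * b ^ p) : d = k := by
  refine le_antisymm (hd.2 hle) (by_contra fun hdk => ?_)
  have : a * a ^ (p + d) < a * b ^ p :=
    calc a * a ^ (p + d) = a ^ (p + d + 1) := (pow_succ' _ _).symm
      _ ≤ a ^ (p + k) := Nat.pow_le_pow_right ha (by omega)
      _ < a * b ^ p := hlt
  exact absurd hd.1 (not_le.2 (Nat.lt_of_mul_lt_mul_left this))

end Bracket

theorem stmt_5_general (a b : ℕ) (ha : 1 < a) (hab : a < b)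
    (d : ℕ → ℕ) (hd : ∀ p : ℕ, IsLeast {k : ℕ | b ^ p ≤ a ^ (p + k)} (d p))
    (φ : ℕ → ℝ) (hφ : ∀ p : ℕ, φ p = (a : ℝ) ^ (p + d p) / (b : ℝ) ^ p) :
    ∀ p₁ p₂ : ℕ,
      (φ p₁ * φ p₂ < a → d (p₁ + p₂) = d p₁ + d p₂) ∧
      ((a : ℝ) ≤ φ p₁ * φ p₂ → (d (p₁ + p₂) : ℤ) = (d p₁ : ℤ) + (d p₂ : ℤ) - 1) := by
  intro p₁ p₂
  have hb : 0 < b := by omega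
  set s := p₁ + p₂
  set n := d p₁ + d p₂
  have hexp {M : Type} [Monoid M] (x : M) : x ^ (s + n) = x ^ (p₁ + d p₁) * x ^ (p₂ + d p₂) := by
    rw [← pow_add]; congr 1; omega
  have hlow : b ^ s ≤ a ^ (s + n) := by
    rw [hexp, pow_add]; exact Nat.mul_le_mul (hd p₁).1 (hd p₂).1
  have hup : a ^ (s + n) < a * (a * b ^ s) :=
    calc a ^ (s + n) = a ^ (p₁ + d p₁) * a ^ (p₂ + d p₂) := hexp a
      _ < (a * b ^ p₁) * (a * b ^ p₂) :=
        Nat.mul_lt_mul_of_lt_of_le (pow_add_lt_mul_pow_of_isLeast ha hab.le (hd p₁))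
          (pow_add_lt_mul_pow_of_isLeast ha hab.le (hd p₂)).le (by positivity)
      _ = a * (a * b ^ s) := by rw [pow_add]; ring
  have hprod : φ p₁ * φ p₂ = (a : ℝ) ^ (s + n) / (b : ℝ) ^ s := by
    rw [hφ, hφ, div_mul_div_comm, ← hexp, ← pow_add]
  have hbs : (0 : ℝ) < (b : ℝ) ^ s := by positivity
  constructor
  · intro h
    rw [hprod, div_lt_iff₀ hbs] at h
    exact eq_of_isLeast_of_pow_add_lt (by omega) (hd s) hlow (by exact_mod_cast h)
  · intro h
    rw [hprod, le_div_iff₀ hbs] at h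
    have hge : a * b ^ s ≤ a ^ (s + n) := by exact_mod_cast h
    have hn : n ≠ 0 := by
      rintro hn0
      rw [hn0, add_zero] at hge
      exact absurd (hge.trans (Nat.pow_le_pow_left hab.le s))
        (not_le.2 (lt_mul_of_one_lt_left (by positivity) ha))
    have hpred : a ^ (s + n) = a * a ^ (s + (n - 1)) := by
      rw [← pow_succ']; congr 1; omega
    rw [hpred] at hge hup
    have hds : d s = n - 1 := eq_of_isLeast_of_pow_add_lt (by omega) (hd s)
      (Nat.le_of_mul_le_mul_left hge (by omega)) (Nat.lt_of_mul_lt_mul_left hup)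
    omega

theorem stmt_5 (a b : ℕ) (ha : 1 < a) (hab : a < b) (hcop : Nat.Coprime a b)
    (d : ℕ → ℕ) (hd : ∀ p : ℕ, IsLeast {k : ℕ | b ^ p ≤ a ^ (p + k)} (d p))
    (φ : ℕ → ℝ) (hφ : ∀ p : ℕ, φ p = (a : ℝ) ^ (p + d p) / (b : ℝ) ^ p) :
    ∀ p₁ p₂ : ℕ,
      (φ p₁ * φ p₂ < a → d (p₁ + p₂) = d p₁ + d p₂) ∧
      ((a : ℝ) ≤ φ p₁ * φ p₂ → (d (p₁ + p₂) : ℤ) = (d p₁ : ℤ) + (d p₂ : ℤ) - 1) :=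
  stmt_5_general a b ha hab d hd φ hφ
end

section
/- The sequence u is monotonically nonincreasing and bounded below by 1, hence converges to a limit l₁ ≥ 1; the sequence v is monotonically nondecreasing and bounded above by a, hence converges to a limit l₂ ≤ a. -/
/-!
The recursion preserves `1 ≤ u`, `1 ≤ v < a`, starting from `φ 1 ∈ [1, a)` (minimality of `d 1`).
Under these bounds `u` can only be divided by `a / v ≥ 1` and `v` only multiplied by `u ≥ 1`,
so `u` decreases and `v` increases, and bounded monotone real sequences converge.
-/

open Filter Topology

def IsUVSequence (a : ℝ) (u v : ℕ → ℝ) : Prop :=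
  ∀ i : ℕ,
    (u i * v i < a → u (i + 1) = u i ∧ v (i + 1) = u i * v i) ∧
    (a ≤ u i * v i → u (i + 1) = (u i * v i) / a ∧ v (i + 1) = v i)

lemma one_le_and_lt_of_isLeast {a b p d : ℕ} (ha : 1 < a) (hab : a ≤ b)
    (hd : IsLeast {k : ℕ | b ^ p ≤ a ^ (p + k)} d) :
    1 ≤ (a : ℝ) ^ (p + d) / (b : ℝ) ^ p ∧ (a : ℝ) ^ (p + d) / (b : ℝ) ^ p < a := by
  have hbp : 0 < b ^ p := pow_pos (by omega) p
  have hlt : a ^ (p + d) < a * b ^ p := by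
    cases d with
    | zero => calc a ^ p ≤ b ^ p := Nat.pow_le_pow_left hab p
        _ < a * b ^ p := lt_mul_left hbp ha
    | succ k =>
      have hk : a ^ (p + k) < b ^ p := not_le.1 fun h ↦ by simpa using hd.2 h
      calc a ^ (p + (k + 1)) = a * a ^ (p + k) := by ring
        _ < a * b ^ p := Nat.mul_lt_mul_of_pos_left hk (by omega)
  have hbp' : (0 : ℝ) < (b : ℝ) ^ p := by exact_mod_cast hbp
  rw [one_le_div hbp', div_lt_iff₀ hbp']
  exact ⟨by exact_mod_cast hd.1, by exact_mod_cast hlt⟩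

namespace IsUVSequence

variable {a : ℝ} {u v : ℕ → ℝ}

lemma bounds (h : IsUVSequence a u v) (ha : 0 < a) (hu0 : 1 ≤ u 0) (hv0 : 1 ≤ v 0)
    (hva : v 0 < a) (i : ℕ) : 1 ≤ u i ∧ 1 ≤ v i ∧ v i < a := by
  induction i with
  | zero => exact ⟨hu0, hv0, hva⟩
  | succ i ih =>
    obtain ⟨hu, hv, hva⟩ := ih
    rcases lt_or_ge (u i * v i) a with hlt | hge
    · obtain ⟨hu', hv'⟩ := (h i).1 hlt
      rw [hu', hv']
      exact ⟨hu, one_le_mul_of_one_le_of_one_le hu hv, hlt⟩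
    · obtain ⟨hu', hv'⟩ := (h i).2 hge
      rw [hu', hv', one_le_div ha]
      exact ⟨hge, hv, hva⟩

lemma antitone (h : IsUVSequence a u v) (ha : 0 < a) (hu : ∀ i, 0 ≤ u i)
    (hv : ∀ i, v i ≤ a) : Antitone u := by
  refine antitone_nat_of_succ_le fun i ↦ ?_
  rcases lt_or_ge (u i * v i) a with hlt | hge
  · exact ((h i).1 hlt).1.le
  · rw [((h i).2 hge).1, div_le_iff₀ ha]
    exact mul_le_mul_of_nonneg_left (hv i) (hu i)

lemma monotone (h : IsUVSequence a u v) (hu : ∀ i, 1 ≤ u i) (hv : ∀ i, 0 ≤ v i) :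
    Monotone v := by
  refine monotone_nat_of_le_succ fun i ↦ ?_
  rcases lt_or_ge (u i * v i) a with hlt | hge
  · rw [((h i).1 hlt).2]
    exact le_mul_of_one_le_left (hv i) (hu i)
  · exact ((h i).2 hge).2.ge

end IsUVSequence

lemma exists_tendsto_of_antitone_of_forall_le {u : ℕ → ℝ} (hu : Antitone u) {c : ℝ}
    (hc : ∀ i, c ≤ u i) : ∃ l, c ≤ l ∧ Tendsto u atTop (𝓝 l) :=
  ⟨⨅ i, u i, le_ciInf hc, tendsto_atTop_ciInf hu ⟨c, Set.forall_mem_range.2 hc⟩⟩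

lemma exists_tendsto_of_monotone_of_forall_le {v : ℕ → ℝ} (hv : Monotone v) {c : ℝ}
    (hc : ∀ i, v i ≤ c) : ∃ l, l ≤ c ∧ Tendsto v atTop (𝓝 l) :=
  ⟨⨆ i, v i, ciSup_le hc, tendsto_atTop_ciSup hv ⟨c, Set.forall_mem_range.2 hc⟩⟩

theorem stmt_9_general (a b : ℕ) (ha : 1 < a) (hab : a < b)
    (d : ℕ → ℕ) (hd : ∀ p : ℕ, IsLeast {k : ℕ | b ^ p ≤ a ^ (p + k)} (d p))
    (φ : ℕ → ℝ) (hφ : ∀ p : ℕ, φ p = (a : ℝ) ^ (p + d p) / (b : ℝ) ^ p)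
    (u v : ℕ → ℝ) (hu0 : u 0 = φ 1) (hv0 : v 0 = φ 1)
    (huv : ∀ i : ℕ,
      (u i * v i < a → u (i + 1) = u i ∧ v (i + 1) = u i * v i) ∧
      ((a : ℝ) ≤ u i * v i → u (i + 1) = (u i * v i) / a ∧ v (i + 1) = v i)) :
    Antitone u ∧ (∀ i : ℕ, 1 ≤ u i) ∧
    (∃ l₁ : ℝ, 1 ≤ l₁ ∧ Tendsto u atTop (nhds l₁)) ∧
    Monotone v ∧ (∀ i : ℕ, v i ≤ a) ∧
    (∃ l₂ : ℝ, l₂ ≤ a ∧ Tendsto v atTop (nhds l₂)) := by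
  have huv : IsUVSequence a u v := huv
  have ha0 : (0 : ℝ) < a := by positivity
  obtain ⟨hφ1, hφa⟩ := one_le_and_lt_of_isLeast ha hab.le (hd 1)
  rw [← hφ] at hφ1 hφa
  have hbounds := huv.bounds ha0 (hu0 ▸ hφ1) (hv0 ▸ hφ1) (hv0 ▸ hφa)
  have hu1 : ∀ i, 1 ≤ u i := fun i ↦ (hbounds i).1
  have hva : ∀ i, v i ≤ a := fun i ↦ (hbounds i).2.2.le
  have hanti := huv.antitone ha0 (fun i ↦ zero_le_one.trans (hu1 i)) hva
  have hmono := huv.monotone hu1 (fun i ↦ zero_le_one.trans (hbounds i).2.1)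
  exact ⟨hanti, hu1, exists_tendsto_of_antitone_of_forall_le hanti hu1,
    hmono, hva, exists_tendsto_of_monotone_of_forall_le hmono hva⟩

theorem stmt_9 (a b : ℕ) (ha : 1 < a) (hab : a < b) (hcop : Nat.Coprime a b)
    (d : ℕ → ℕ) (hd : ∀ p : ℕ, IsLeast {k : ℕ | b ^ p ≤ a ^ (p + k)} (d p))
    (φ : ℕ → ℝ) (hφ : ∀ p : ℕ, φ p = (a : ℝ) ^ (p + d p) / (b : ℝ) ^ p)
    (F : Set ℝ) (hF : F = Set.range φ)
    (u v : ℕ → ℝ) (hu0 : u 0 = φ 1) (hv0 : v 0 = φ 1)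
    (huv : ∀ i : ℕ,
      (u i * v i < a → u (i + 1) = u i ∧ v (i + 1) = u i * v i) ∧
      ((a : ℝ) ≤ u i * v i → u (i + 1) = (u i * v i) / a ∧ v (i + 1) = v i)) :
    Antitone u ∧ (∀ i : ℕ, 1 ≤ u i) ∧
    (∃ l₁ : ℝ, 1 ≤ l₁ ∧ Tendsto u atTop (nhds l₁)) ∧
    Monotone v ∧ (∀ i : ℕ, v i ≤ a) ∧
    (∃ l₂ : ℝ, l₂ ≤ a ∧ Tendsto v atTop (nhds l₂)) :=
  stmt_9_general a b ha hab d hd φ hφ u v hu0 hv0 huv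
end

section
/- The set {u i : i ∈ ℕ} equals the set of minimum record holders, i.e. the set of real numbers φ(p) with p ≥ 1 such that φ(p) = min{φ(p') : 1 ≤ p' ≤ p}; and the set {v i : i ∈ ℕ} equals the set of maximum record holders, i.e. the set of real numbers φ(p) with p ≥ 1 such that φ(p) = max{φ(p') : 1 ≤ p' ≤ p}. -/
/-!
`φ p = a ^ (p + d p) / b ^ p` is the unique number of the form `a ^ (p + k) / b ^ p` in `[1, a)`,
so `φ (p + q)` is `φ p * φ q`, divided by `a` if it is at least `a`: `p ↦ φ p` is an orbit of a
rotation of the circle `[1, a)`. If `φ s` and `φ t` are the minimum and the maximum of `φ` on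
`[1, s + t)`, then `φ (s + t)` becomes the new maximum when `φ s * φ t < a` and the new minimum
otherwise, and the extremes persist up to `2 s + t` (resp. `s + 2 t`). Hence the index pairs evolve
by the mediant rule `(s, t) ↦ (s, s + t)` or `(s + t, t)` exactly as `(u, v)` does, and every record
index falls into one of these windows.
-/

open Set

/-- The model is `f p = A ^ fract (p * θ)`. -/
structure IsWrappedMul (A : ℝ) (f : ℕ → ℝ) : Prop where
  one_le : ∀ p, 1 ≤ p → 1 ≤ f p
  lt : ∀ p, 1 ≤ p → f p < A
  add_of_lt : ∀ p q, 1 ≤ p → 1 ≤ q → f p * f q < A → f (p + q) = f p * f q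
  add_of_le : ∀ p q, 1 ≤ p → 1 ≤ q → A ≤ f p * f q → f (p + q) = f p * f q / A

structure IsRecordWindow (f : ℕ → ℝ) (s t : ℕ) : Prop where
  one_le_left : 1 ≤ s
  one_le_right : 1 ≤ t
  left_le : ∀ j, 1 ≤ j → j < s + t → f s ≤ f j
  le_right : ∀ j, 1 ≤ j → j < s + t → f j ≤ f t

namespace IsWrappedMul

variable {A : ℝ} {f : ℕ → ℝ} {s t : ℕ}

theorem isRecordWindow_left (hf : IsWrappedMul A f) (hw : IsRecordWindow f s t)
    (h : f s * f t < A) : IsRecordWindow f s (s + t) := by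
  obtain ⟨hs, ht, hmin, hmax⟩ := hw
  have hst : f (s + t) = f s * f t := hf.add_of_lt s t hs ht h
  have hfs := hf.one_le s hs
  have ht_le : f t ≤ f (s + t) := by rw [hst]; nlinarith [hf.one_le t ht]
  -- a new index is `j = s + j'` with `j'` in the old window, so `f s * f j' ≤ f s * f t < A`
  have shift : ∀ j, s + t ≤ j → j < s + (s + t) →
      f j = f s * f (j - s) ∧ 1 ≤ j - s ∧ j - s < s + t :=
    fun j hj₁ hj₂ ↦ by
      have hj' : f (j - s) ≤ f t := hmax (j - s) (by omega) (by omega)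
      have := hf.add_of_lt s (j - s) hs (by omega) (by nlinarith)
      exact ⟨by rwa [Nat.add_sub_cancel' (by omega)] at this, by omega, by omega⟩
  refine ⟨hs, by omega, fun j hj₁ hj₂ ↦ ?_, fun j hj₁ hj₂ ↦ ?_⟩
  · rcases lt_or_ge j (s + t) with hj | hj
    · exact hmin j hj₁ hj
    · obtain ⟨hfj, hj'₁, -⟩ := shift j hj hj₂
      rw [hfj]; nlinarith [hf.one_le (j - s) hj'₁]
  · rcases lt_or_ge j (s + t) with hj | hj
    · exact (hmax j hj₁ hj).trans ht_le
    · obtain ⟨hfj, hj'₁, hj'₂⟩ := shift j hj hj₂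
      rw [hfj, hst]; nlinarith [hmax (j - s) hj'₁ hj'₂]

theorem isRecordWindow_right (hf : IsWrappedMul A f) (hw : IsRecordWindow f s t)
    (h : A ≤ f s * f t) : IsRecordWindow f (s + t) t := by
  obtain ⟨hs, ht, hmin, hmax⟩ := hw
  have hA : 0 < A := lt_of_le_of_lt (zero_le_one.trans (hf.one_le t ht)) (hf.lt t ht)
  have hst : f (s + t) = f s * f t / A := hf.add_of_le s t hs ht h
  have hft := hf.one_le t ht
  have hs_le : f (s + t) ≤ f s := by
    rw [hst, div_le_iff₀ hA]; nlinarith [hf.one_le s hs, hf.lt t ht]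
  -- a new index is `j = t + j'` with `j'` in the old window, so `A ≤ f s * f t ≤ f t * f j'`
  have shift : ∀ j, s + t ≤ j → j < s + t + t →
      f j = f t * f (j - t) / A ∧ 1 ≤ j - t ∧ f s ≤ f (j - t) :=
    fun j hj₁ hj₂ ↦ by
      have hj' : f s ≤ f (j - t) := hmin (j - t) (by omega) (by omega)
      have := hf.add_of_le t (j - t) ht (by omega) (by nlinarith)
      exact ⟨by rwa [Nat.add_sub_cancel' (by omega)] at this, by omega, hj'⟩
  refine ⟨by omega, ht, fun j hj₁ hj₂ ↦ ?_, fun j hj₁ hj₂ ↦ ?_⟩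
  · rcases lt_or_ge j (s + t) with hj | hj
    · exact hs_le.trans (hmin j hj₁ hj)
    · obtain ⟨hfj, hj'₁, hj'₂⟩ := shift j hj hj₂
      rw [hfj, hst, mul_comm (f s)]
      exact div_le_div_of_nonneg_right (mul_le_mul_of_nonneg_left hj'₂ (by linarith)) hA.le
  · rcases lt_or_ge j (s + t) with hj | hj
    · exact hmax j hj₁ hj
    · obtain ⟨hfj, hj'₁, -⟩ := shift j hj hj₂
      rw [hfj, div_le_iff₀ hA]; nlinarith [hf.lt (j - t) hj'₁]

end IsWrappedMul

theorem Nat.exists_le_lt_of_le_of_strictMono {m N : ℕ → ℕ} {p : ℕ} (h₀ : m 0 ≤ p)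
    (hm : ∀ i, m (i + 1) ≤ N i) (hN : StrictMono N) : ∃ i, m i ≤ p ∧ p < N i := by
  have hex : ∃ i, p < N i := ⟨p + 1, (Nat.lt_succ_self p).trans_le (hN.id_le _)⟩
  refine ⟨Nat.find hex, ?_, Nat.find_spec hex⟩
  rcases h : Nat.find hex with _ | i
  · exact h₀
  · exact (hm i).trans (not_lt.mp (Nat.find_min hex (h ▸ Nat.lt_succ_self i)))

noncomputable def mediantPair (A : ℝ) (f : ℕ → ℝ) : ℕ → ℕ × ℕ
  | 0 => (1, 1)
  | i + 1 =>
      let (s, t) := mediantPair A f i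
      if f s * f t < A then (s, s + t) else (s + t, t)

section mediantPair

variable {A : ℝ} {f : ℕ → ℝ} {i : ℕ}

theorem mediantPair_succ_of_lt (h : f (mediantPair A f i).1 * f (mediantPair A f i).2 < A) :
    mediantPair A f (i + 1) =
      ((mediantPair A f i).1, (mediantPair A f i).1 + (mediantPair A f i).2) := by
  simp only [mediantPair, if_pos h]

theorem mediantPair_succ_of_le (h : A ≤ f (mediantPair A f i).1 * f (mediantPair A f i).2) :
    mediantPair A f (i + 1) =
      ((mediantPair A f i).1 + (mediantPair A f i).2, (mediantPair A f i).2) := by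
  simp only [mediantPair, if_neg h.not_gt]

theorem one_le_mediantPair (i : ℕ) :
    1 ≤ (mediantPair A f i).1 ∧ 1 ≤ (mediantPair A f i).2 := by
  induction i with
  | zero => exact ⟨le_rfl, le_rfl⟩
  | succ i ih =>
    rcases lt_or_ge (f (mediantPair A f i).1 * f (mediantPair A f i).2) A with h | h
    · rw [mediantPair_succ_of_lt h]; omega
    · rw [mediantPair_succ_of_le h]; omega

theorem mediantPair_succ_le (i : ℕ) :
    (mediantPair A f (i + 1)).1 ≤ (mediantPair A f i).1 + (mediantPair A f i).2 ∧
      (mediantPair A f (i + 1)).2 ≤ (mediantPair A f i).1 + (mediantPair A f i).2 ∧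
      (mediantPair A f i).1 + (mediantPair A f i).2 <
        (mediantPair A f (i + 1)).1 + (mediantPair A f (i + 1)).2 := by
  have := one_le_mediantPair (A := A) (f := f) i
  rcases lt_or_ge (f (mediantPair A f i).1 * f (mediantPair A f i).2) A with h | h
  · rw [mediantPair_succ_of_lt h]; omega
  · rw [mediantPair_succ_of_le h]; omega

theorem strictMono_mediantPair_sum :
    StrictMono fun i ↦ (mediantPair A f i).1 + (mediantPair A f i).2 :=
  strictMono_nat_of_lt_succ fun i ↦ (mediantPair_succ_le i).2.2

end mediantPair

namespace IsWrappedMul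

variable {A : ℝ} {f : ℕ → ℝ}

theorem isRecordWindow_mediantPair (hf : IsWrappedMul A f) (i : ℕ) :
    IsRecordWindow f (mediantPair A f i).1 (mediantPair A f i).2 := by
  induction i with
  | zero =>
    have hj : ∀ j, 1 ≤ j → j < 1 + 1 → j = 1 := fun j h₁ h₂ ↦ by omega
    exact ⟨le_rfl, le_rfl, fun j h₁ h₂ ↦ hj j h₁ h₂ ▸ le_rfl, fun j h₁ h₂ ↦ hj j h₁ h₂ ▸ le_rfl⟩
  | succ i ih =>
    rcases lt_or_ge (f (mediantPair A f i).1 * f (mediantPair A f i).2) A with h | h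
    · rw [mediantPair_succ_of_lt h]; exact hf.isRecordWindow_left ih h
    · rw [mediantPair_succ_of_le h]; exact hf.isRecordWindow_right ih h

theorem range_mediantPair_fst (hf : IsWrappedMul A f) :
    range (fun i ↦ f (mediantPair A f i).1) =
      {x | ∃ p, 1 ≤ p ∧ x = f p ∧ ∀ p', 1 ≤ p' → p' ≤ p → f p ≤ f p'} := by
  ext x
  constructor
  · rintro ⟨i, rfl⟩
    have hw := hf.isRecordWindow_mediantPair i
    have := hw.one_le_right
    exact ⟨_, hw.one_le_left, rfl, fun p' hp'₁ hp'₂ ↦ hw.left_le p' hp'₁ (by omega)⟩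
  · rintro ⟨p, hp, rfl, hrec⟩
    obtain ⟨i, hi₁, hi₂⟩ :=
      Nat.exists_le_lt_of_le_of_strictMono (m := fun i ↦ (mediantPair A f i).1) hp
        (fun i ↦ (mediantPair_succ_le i).1) strictMono_mediantPair_sum
    have hw := hf.isRecordWindow_mediantPair i
    exact ⟨i, le_antisymm (hw.left_le p hp hi₂) (hrec _ hw.one_le_left hi₁)⟩

theorem range_mediantPair_snd (hf : IsWrappedMul A f) :
    range (fun i ↦ f (mediantPair A f i).2) =
      {x | ∃ p, 1 ≤ p ∧ x = f p ∧ ∀ p', 1 ≤ p' → p' ≤ p → f p' ≤ f p} := by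
  ext x
  constructor
  · rintro ⟨i, rfl⟩
    have hw := hf.isRecordWindow_mediantPair i
    have := hw.one_le_left
    exact ⟨_, hw.one_le_right, rfl, fun p' hp'₁ hp'₂ ↦ hw.le_right p' hp'₁ (by omega)⟩
  · rintro ⟨p, hp, rfl, hrec⟩
    obtain ⟨i, hi₁, hi₂⟩ :=
      Nat.exists_le_lt_of_le_of_strictMono (m := fun i ↦ (mediantPair A f i).2) hp
        (fun i ↦ (mediantPair_succ_le i).2.1) strictMono_mediantPair_sum
    have hw := hf.isRecordWindow_mediantPair i
    exact ⟨i, le_antisymm (hrec _ hw.one_le_right hi₁) (hw.le_right p hp hi₂)⟩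

theorem eq_apply_mediantPair {u v : ℕ → ℝ} (hf : IsWrappedMul A f)
    (hu0 : u 0 = f 1) (hv0 : v 0 = f 1)
    (huv : ∀ i : ℕ,
      (u i * v i < A → u (i + 1) = u i ∧ v (i + 1) = u i * v i) ∧
      (A ≤ u i * v i → u (i + 1) = (u i * v i) / A ∧ v (i + 1) = v i)) (i : ℕ) :
    u i = f (mediantPair A f i).1 ∧ v i = f (mediantPair A f i).2 := by
  induction i with
  | zero => exact ⟨hu0, hv0⟩
  | succ i ih =>
    obtain ⟨hs, ht⟩ := one_le_mediantPair (A := A) (f := f) i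
    obtain ⟨hu, hv⟩ := ih
    rcases lt_or_ge (f (mediantPair A f i).1 * f (mediantPair A f i).2) A with h | h
    · rw [mediantPair_succ_of_lt h, hf.add_of_lt _ _ hs ht h, ← hu, ← hv]
      exact (huv i).1 (hu ▸ hv ▸ h)
    · rw [mediantPair_succ_of_le h, hf.add_of_le _ _ hs ht h, ← hu, ← hv]
      exact (huv i).2 (hu ▸ hv ▸ h)

end IsWrappedMul

theorem Nat.eq_of_isLeast_pow_le {a b p n k : ℕ} (ha : 0 < a)
    (hn : IsLeast {k : ℕ | b ^ p ≤ a ^ (p + k)} n) (h₁ : b ^ p ≤ a ^ (p + k))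
    (h₂ : a ^ (p + k) < a * b ^ p) : n = k := by
  refine le_antisymm (hn.2 h₁) (not_lt.mp fun hlt ↦ h₂.not_ge ?_)
  calc a * b ^ p ≤ a * a ^ (p + n) := Nat.mul_le_mul_left a hn.1
    _ = a ^ (p + n + 1) := Nat.pow_succ'.symm
    _ ≤ a ^ (p + k) := Nat.pow_le_pow_right ha (by omega)

theorem Nat.pos_of_isLeast_pow_le {a b p n : ℕ} (hab : a < b)
    (hn : IsLeast {k : ℕ | b ^ p ≤ a ^ (p + k)} n) (hp : 1 ≤ p) : 0 < n := by
  refine Nat.pos_of_ne_zero fun h ↦ ?_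
  have : b ^ p ≤ a ^ (p + n) := hn.1
  rw [h, add_zero] at this
  exact this.not_gt (Nat.pow_lt_pow_left hab (by omega))

section phi

variable {a b : ℕ} {d : ℕ → ℕ} {φ : ℕ → ℝ}

theorem phi_eq_of_one_le_of_lt (ha : 0 < a) (hb : 0 < b)
    (hd : ∀ p : ℕ, IsLeast {k : ℕ | b ^ p ≤ a ^ (p + k)} (d p))
    (hφ : ∀ p : ℕ, φ p = (a : ℝ) ^ (p + d p) / (b : ℝ) ^ p) {p k : ℕ}
    (h₁ : 1 ≤ (a : ℝ) ^ (p + k) / (b : ℝ) ^ p) (h₂ : (a : ℝ) ^ (p + k) / (b : ℝ) ^ p < a) :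
    φ p = (a : ℝ) ^ (p + k) / (b : ℝ) ^ p := by
  have hbp : (0 : ℝ) < (b : ℝ) ^ p := by positivity
  rw [one_le_div₀ hbp] at h₁
  rw [div_lt_iff₀ hbp] at h₂
  rw [hφ, Nat.eq_of_isLeast_pow_le ha (hd p) (by exact_mod_cast h₁) (by exact_mod_cast h₂)]

theorem one_le_phi (hb : 0 < b) (hd : ∀ p : ℕ, IsLeast {k : ℕ | b ^ p ≤ a ^ (p + k)} (d p))
    (hφ : ∀ p : ℕ, φ p = (a : ℝ) ^ (p + d p) / (b : ℝ) ^ p) (p : ℕ) : 1 ≤ φ p := by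
  rw [hφ, one_le_div₀ (by positivity)]
  exact_mod_cast (hd p).1

theorem phi_lt (ha : 0 < a) (hab : a < b)
    (hd : ∀ p : ℕ, IsLeast {k : ℕ | b ^ p ≤ a ^ (p + k)} (d p))
    (hφ : ∀ p : ℕ, φ p = (a : ℝ) ^ (p + d p) / (b : ℝ) ^ p) {p : ℕ} (hp : 1 ≤ p) :
    φ p < a := by
  obtain ⟨k, hk⟩ := Nat.exists_eq_add_one.mpr (Nat.pos_of_isLeast_pow_le hab (hd p) hp)
  have hb : 0 < b := ha.trans hab
  rw [hφ, div_lt_iff₀ (by positivity), hk, ← add_assoc, pow_succ']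
  refine mul_lt_mul_of_pos_left ?_ (by exact_mod_cast ha)
  exact_mod_cast not_le.mp fun h ↦ (by omega : ¬ d p ≤ k) ((hd p).2 h)

theorem phi_mul_phi (hφ : ∀ p : ℕ, φ p = (a : ℝ) ^ (p + d p) / (b : ℝ) ^ p) (p q : ℕ) :
    φ p * φ q = (a : ℝ) ^ (p + q + (d p + d q)) / (b : ℝ) ^ (p + q) := by
  rw [hφ, hφ, div_mul_div_comm, ← pow_add, ← pow_add]
  ring_nf

theorem isWrappedMul_phi (ha : 1 < a) (hab : a < b)
    (hd : ∀ p : ℕ, IsLeast {k : ℕ | b ^ p ≤ a ^ (p + k)} (d p))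
    (hφ : ∀ p : ℕ, φ p = (a : ℝ) ^ (p + d p) / (b : ℝ) ^ p) : IsWrappedMul a φ := by
  have ha₀ : 0 < a := by omega
  have hb₀ : 0 < b := by omega
  have hφ₁ := one_le_phi hb₀ hd hφ
  have hφa := fun p ↦ phi_lt ha₀ hab hd hφ (p := p)
  refine ⟨fun p _ ↦ hφ₁ p, hφa, fun p q _ _ h ↦ ?_, fun p q hp _ h ↦ ?_⟩
  · rw [phi_mul_phi hφ] at h ⊢
    exact phi_eq_of_one_le_of_lt ha₀ hb₀ hd hφ
      (phi_mul_phi hφ p q ▸ one_le_mul_of_one_le_of_one_le (hφ₁ p) (hφ₁ q)) h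
  · obtain ⟨k, hk⟩ := Nat.exists_eq_add_one.mpr (Nat.pos_of_isLeast_pow_le hab (hd p) hp)
    have hprod : φ p * φ q = (a : ℝ) ^ (p + q + (k + d q)) / (b : ℝ) ^ (p + q) * a := by
      rw [phi_mul_phi hφ, div_mul_eq_mul_div, ← pow_succ, hk]
      ring_nf
    have hlt : φ p * φ q < a * a := mul_lt_mul'' (hφa p hp) (hφa q ‹_›) (by linarith [hφ₁ p])
      (by linarith [hφ₁ q])
    have ha' : (0 : ℝ) < a := by exact_mod_cast ha₀
    rw [hprod] at h hlt ⊢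
    rw [mul_div_cancel_right₀ _ ha'.ne']
    exact phi_eq_of_one_le_of_lt ha₀ hb₀ hd hφ (le_of_mul_le_mul_right (by linarith) ha')
      (lt_of_mul_lt_mul_right hlt ha'.le)

end phi

theorem stmt_11_general (a b : ℕ) (ha : 1 < a) (hab : a < b)
    (d : ℕ → ℕ) (hd : ∀ p : ℕ, IsLeast {k : ℕ | b ^ p ≤ a ^ (p + k)} (d p))
    (φ : ℕ → ℝ) (hφ : ∀ p : ℕ, φ p = (a : ℝ) ^ (p + d p) / (b : ℝ) ^ p)
    (u v : ℕ → ℝ) (hu0 : u 0 = φ 1) (hv0 : v 0 = φ 1)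
    (huv : ∀ i : ℕ,
      (u i * v i < a → u (i + 1) = u i ∧ v (i + 1) = u i * v i) ∧
      ((a : ℝ) ≤ u i * v i → u (i + 1) = (u i * v i) / a ∧ v (i + 1) = v i)) :
    Set.range u =
      {x : ℝ | ∃ p : ℕ, 1 ≤ p ∧ x = φ p ∧ ∀ p' : ℕ, 1 ≤ p' → p' ≤ p → φ p ≤ φ p'} ∧
    Set.range v =
      {x : ℝ | ∃ p : ℕ, 1 ≤ p ∧ x = φ p ∧ ∀ p' : ℕ, 1 ≤ p' → p' ≤ p → φ p' ≤ φ p} := by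
  have hφw := isWrappedMul_phi ha hab hd hφ
  have hu : u = fun i ↦ φ (mediantPair a φ i).1 :=
    funext fun i ↦ (hφw.eq_apply_mediantPair hu0 hv0 huv i).1
  have hv : v = fun i ↦ φ (mediantPair a φ i).2 :=
    funext fun i ↦ (hφw.eq_apply_mediantPair hu0 hv0 huv i).2
  exact ⟨hu ▸ hφw.range_mediantPair_fst, hv ▸ hφw.range_mediantPair_snd⟩

theorem stmt_11 (a b : ℕ) (ha : 1 < a) (hab : a < b) (hcop : Nat.Coprime a b)
    (d : ℕ → ℕ) (hd : ∀ p : ℕ, IsLeast {k : ℕ | b ^ p ≤ a ^ (p + k)} (d p))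
    (φ : ℕ → ℝ) (hφ : ∀ p : ℕ, φ p = (a : ℝ) ^ (p + d p) / (b : ℝ) ^ p)
    (F : Set ℝ) (hF : F = Set.range φ)
    (u v : ℕ → ℝ) (hu0 : u 0 = φ 1) (hv0 : v 0 = φ 1)
    (huv : ∀ i : ℕ,
      (u i * v i < a → u (i + 1) = u i ∧ v (i + 1) = u i * v i) ∧
      ((a : ℝ) ≤ u i * v i → u (i + 1) = (u i * v i) / a ∧ v (i + 1) = v i)) :
    Set.range u =
      {x : ℝ | ∃ p : ℕ, 1 ≤ p ∧ x = φ p ∧ ∀ p' : ℕ, 1 ≤ p' → p' ≤ p → φ p ≤ φ p'} ∧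
    Set.range v =
      {x : ℝ | ∃ p : ℕ, 1 ≤ p ∧ x = φ p ∧ ∀ p' : ℕ, 1 ≤ p' → p' ≤ p → φ p' ≤ φ p} :=
  stmt_11_general a b ha hab d hd φ hφ u v hu0 hv0 huv
end

section
/- For every i : ℕ one has 1 < u (i+1) < w (i+1) < u i < w i; in particular both sequences are strictly decreasing and bounded below by 1. -/
/-! Each step is a multiplicative Euclidean division: if `a ^ l < b < a ^ (l + 1)` with `a > 0`,
then the remainder `b / a ^ l` lies strictly between `1` and `a`. Applied twice per index, this
gives `1 < u (i + 1) < w (i + 1) < u i`, and `u i < w i` because `u i ≤ u i ^ λ₁ < w i`. -/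

section EuclideanStep

variable {K : Type*} [Field K] [LinearOrder K] [IsStrictOrderedRing K] {a b : K} {l : ℕ}

lemma one_lt_div_pow_of_pow_lt (ha : 0 < a) (h : a ^ l < b) : 1 < b / a ^ l :=
  (one_lt_div (pow_pos ha l)).2 h

lemma div_pow_lt_of_lt_pow_succ (ha : 0 < a) (h : b < a ^ (l + 1)) : b / a ^ l < a := by
  rwa [div_lt_iff₀ (pow_pos ha l), ← pow_succ']

lemma lt_of_pow_lt (ha : 1 ≤ a) (hl : 0 < l) (h : a ^ l < b) : a < b :=
  (le_self_pow₀ ha hl.ne').trans_lt h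

lemma euclidean_step_bounds {a' b' : K} {l₁ l₂ : ℕ} (ha : 1 < a) (hl₁ : 0 < l₁)
    (h₁ : a ^ l₁ < b) (h₂ : b < a ^ (l₁ + 1)) (hb' : b' = b / a ^ l₁)
    (h₃ : b' ^ l₂ < a) (h₄ : a < b' ^ (l₂ + 1)) (ha' : a' = a / b' ^ l₂) :
    1 < a' ∧ a' < b' ∧ b' < a ∧ a < b := by
  have ha₀ : 0 < a := zero_lt_one.trans ha
  have hb'₁ : 1 < b' := hb' ▸ one_lt_div_pow_of_pow_lt ha₀ h₁
  have hb'₀ : 0 < b' := zero_lt_one.trans hb'₁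
  exact ⟨ha' ▸ one_lt_div_pow_of_pow_lt hb'₀ h₃, ha' ▸ div_pow_lt_of_lt_pow_succ hb'₀ h₄,
    hb' ▸ div_pow_lt_of_lt_pow_succ ha₀ h₂, lt_of_pow_lt ha.le hl₁ h₁⟩

end EuclideanStep

theorem stmt_14_general (u w : ℕ → ℝ) (hu0 : 1 < u 0)
    (hrec : ∀ i : ℕ, ∃ l1 l2 : ℕ, 0 < l1 ∧ 0 < l2 ∧
      (u i) ^ l1 < w i ∧ w i < (u i) ^ (l1 + 1) ∧ w (i + 1) = w i / (u i) ^ l1 ∧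
      (w (i + 1)) ^ l2 < u i ∧ u i < (w (i + 1)) ^ (l2 + 1) ∧
      u (i + 1) = u i / (w (i + 1)) ^ l2) :
    (∀ i : ℕ, 1 < u (i + 1) ∧ u (i + 1) < w (i + 1) ∧ w (i + 1) < u i ∧ u i < w i) ∧
    StrictAnti u ∧ StrictAnti w ∧ (∀ i : ℕ, 1 < u i ∧ 1 < w i) := by
  have step : ∀ i, 1 < u i →
      1 < u (i + 1) ∧ u (i + 1) < w (i + 1) ∧ w (i + 1) < u i ∧ u i < w i := by
    intro i hu
    obtain ⟨l1, l2, hl1, -, h₁, h₂, hw, h₃, h₄, hu'⟩ := hrec i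
    exact euclidean_step_bounds hu hl1 h₁ h₂ hw h₃ h₄ hu'
  have one_lt_u : ∀ i, 1 < u i := by
    intro i
    induction i with
    | zero => exact hu0
    | succ n ih => exact (step n ih).1
  have chain := fun i => step i (one_lt_u i)
  refine ⟨chain, strictAnti_nat_of_succ_lt fun i => ?_, strictAnti_nat_of_succ_lt fun i => ?_,
    fun i => ⟨one_lt_u i, (one_lt_u i).trans (chain i).2.2.2⟩⟩
  · exact (chain i).2.1.trans (chain i).2.2.1
  · exact (chain i).2.2.1.trans (chain i).2.2.2

theorem stmt_14 (u w : ℕ → ℝ) (hu0 : 1 < u 0) (huw0 : u 0 < w 0)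
    (hrec : ∀ i : ℕ, ∃ l1 l2 : ℕ, 0 < l1 ∧ 0 < l2 ∧
      (u i) ^ l1 < w i ∧ w i < (u i) ^ (l1 + 1) ∧ w (i + 1) = w i / (u i) ^ l1 ∧
      (w (i + 1)) ^ l2 < u i ∧ u i < (w (i + 1)) ^ (l2 + 1) ∧
      u (i + 1) = u i / (w (i + 1)) ^ l2) :
    (∀ i : ℕ, 1 < u (i + 1) ∧ u (i + 1) < w (i + 1) ∧ w (i + 1) < u i ∧ u i < w i) ∧
    StrictAnti u ∧ StrictAnti w ∧ (∀ i : ℕ, 1 < u i ∧ 1 < w i) :=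
  stmt_14_general u w hu0 hrec
end

section
/- The sequence u converges to 1 and the sequence v converges to a: lim_{i→∞} u i = 1 and lim_{i→∞} v i = a. -/
/-!
Both sequences stay in `[1, a)`: `u` decreases, `v` increases, so they converge, to `L ≥ 1` and
`M ≤ a`. Each of the two branches of the recursion is taken infinitely often: staying in the
second branch forever would drive `u` to `0` geometrically, staying in the first would drive `v`
to infinity, because `u > 1`. The latter holds since every `u i` has the shape `a ^ m / b ^ n`
with `n ≥ 1`, which never equals `1` when `a` and `b` are coprime. Passing to the limit along the
first branch gives `L * M ≤ M`, along the second `a ≤ L * M`, whence `L = 1` and `M = a`.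
-/

open Filter Topology

def SatisfiesUVRecursion (A : ℝ) (u v : ℕ → ℝ) : Prop :=
  ∀ i : ℕ, (u i * v i < A → u (i + 1) = u i ∧ v (i + 1) = u i * v i) ∧
    (A ≤ u i * v i → u (i + 1) = u i * v i / A ∧ v (i + 1) = v i)

namespace SatisfiesUVRecursion

variable {A : ℝ} {u v : ℕ → ℝ}

theorem forall_of_closed (h : SatisfiesUVRecursion A u v) {P : ℝ → Prop}
    (hmul : ∀ x y, P x → P y → P (x * y)) (hdiv : ∀ x, P x → P (x / A))
    (hu0 : P (u 0)) (hv0 : P (v 0)) : ∀ i, P (u i) ∧ P (v i) := by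
  intro i
  induction i with
  | zero => exact ⟨hu0, hv0⟩
  | succ i ih =>
    rcases lt_or_ge (u i * v i) A with hc | hc
    · obtain ⟨hu, hv⟩ := (h i).1 hc
      rw [hu, hv]
      exact ⟨ih.1, hmul _ _ ih.1 ih.2⟩
    · obtain ⟨hu, hv⟩ := (h i).2 hc
      rw [hu, hv]
      exact ⟨hdiv _ (hmul _ _ ih.1 ih.2), ih.2⟩

theorem mem_Ico (h : SatisfiesUVRecursion A u v) (hu0 : u 0 ∈ Set.Ico 1 A)
    (hv0 : v 0 ∈ Set.Ico 1 A) : ∀ i, u i ∈ Set.Ico 1 A ∧ v i ∈ Set.Ico 1 A := by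
  intro i
  induction i with
  | zero => exact ⟨hu0, hv0⟩
  | succ i ih =>
    obtain ⟨⟨hu1, huA⟩, hv1, hvA⟩ := ih
    have hA : 0 < A := by linarith
    rcases lt_or_ge (u i * v i) A with hc | hc
    · obtain ⟨hu, hv⟩ := (h i).1 hc
      rw [hu, hv]
      exact ⟨⟨hu1, huA⟩, by nlinarith, hc⟩
    · obtain ⟨hu, hv⟩ := (h i).2 hc
      rw [hu, hv, Set.mem_Ico, le_div_iff₀ hA, div_lt_iff₀ hA]
      exact ⟨⟨by linarith, by nlinarith⟩, hv1, hvA⟩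

variable (h : SatisfiesUVRecursion A u v) (hI : ∀ i, u i ∈ Set.Ico 1 A ∧ v i ∈ Set.Ico 1 A)
include h hI

theorem antitone : Antitone u := by
  refine antitone_nat_of_succ_le fun i => ?_
  obtain ⟨⟨hu1, -⟩, hv1, hvA⟩ := hI i
  rcases lt_or_ge (u i * v i) A with hc | hc
  · rw [((h i).1 hc).1]
  · rw [((h i).2 hc).1, div_le_iff₀ (by linarith)]
    nlinarith

theorem monotone : Monotone v := by
  refine monotone_nat_of_le_succ fun i => ?_
  obtain ⟨⟨hu1, -⟩, hv1, -⟩ := hI i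
  rcases lt_or_ge (u i * v i) A with hc | hc
  · rw [((h i).1 hc).2]
    nlinarith
  · rw [((h i).2 hc).2]

omit hI in
theorem iterate_of_forall_ge {N : ℕ} (hN : ∀ i ≥ N, A ≤ u i * v i) (k : ℕ) :
    u (N + k) = u N * (v N / A) ^ k ∧ v (N + k) = v N := by
  induction k with
  | zero => simp
  | succ k ih =>
    obtain ⟨hu, hv⟩ := (h (N + k)).2 (hN _ (Nat.le_add_right N k))
    rw [← add_assoc, hu, hv, ih.1, ih.2, pow_succ]
    exact ⟨by ring, rfl⟩

omit hI in
theorem iterate_of_forall_lt {N : ℕ} (hN : ∀ i ≥ N, u i * v i < A) (k : ℕ) :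
    u (N + k) = u N ∧ v (N + k) = v N * u N ^ k := by
  induction k with
  | zero => simp
  | succ k ih =>
    obtain ⟨hu, hv⟩ := (h (N + k)).1 (hN _ (Nat.le_add_right N k))
    rw [← add_assoc, hu, hv, ih.1, ih.2, pow_succ]
    exact ⟨rfl, by ring⟩

theorem frequently_lt : ∃ᶠ i in atTop, u i * v i < A := by
  by_contra hfreq
  obtain ⟨N, hN⟩ := eventually_atTop.1 (not_frequently.1 hfreq)
  obtain ⟨⟨hu1, -⟩, hv1, hvA⟩ := hI N
  have hratio : v N / A < 1 := (div_lt_one (by linarith)).2 hvA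
  have hlim : Tendsto (fun k => u (N + k)) atTop (𝓝 0) := by
    simp_rw [fun k => (h.iterate_of_forall_ge (fun i hi => not_lt.1 (hN i hi)) k).1]
    simpa using (tendsto_pow_atTop_nhds_zero_of_lt_one
      (div_nonneg (by linarith) (by linarith)) hratio).const_mul (u N)
  have := ge_of_tendsto' hlim fun k => (hI (N + k)).1.1
  norm_num at this

theorem frequently_ge (hu1 : ∀ i, u i ≠ 1) : ∃ᶠ i in atTop, A ≤ u i * v i := by
  by_contra hfreq
  obtain ⟨N, hN⟩ := eventually_atTop.1 (not_frequently.1 hfreq)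
  obtain ⟨⟨huN, -⟩, hv1, -⟩ := hI N
  have hgrow : Tendsto (fun k => v N * u N ^ k) atTop atTop :=
    (tendsto_pow_atTop_atTop_of_one_lt (lt_of_le_of_ne huN (hu1 N).symm)).const_mul_atTop
      (by linarith)
  obtain ⟨k, hk⟩ := (hgrow.eventually_gt_atTop A).exists
  rw [← (h.iterate_of_forall_lt (fun i hi => not_le.1 (hN i hi)) k).2] at hk
  exact absurd (hI (N + k)).2.2 hk.not_gt

theorem tendsto (hu1 : ∀ i, u i ≠ 1) :
    Tendsto u atTop (𝓝 1) ∧ Tendsto v atTop (𝓝 A) := by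
  have hbddu : BddBelow (Set.range u) := ⟨1, by rintro _ ⟨i, rfl⟩; exact (hI i).1.1⟩
  have hbddv : BddAbove (Set.range v) := ⟨A, by rintro _ ⟨i, rfl⟩; exact (hI i).2.2.le⟩
  set L := ⨅ i, u i
  set M := ⨆ i, v i
  have hu : Tendsto u atTop (𝓝 L) := tendsto_atTop_ciInf (h.antitone hI) hbddu
  have hv : Tendsto v atTop (𝓝 M) := tendsto_atTop_ciSup (h.monotone hI) hbddv
  have hL1 : 1 ≤ L := le_ciInf fun i => (hI i).1.1
  have hMA : M ≤ A := ciSup_le fun i => (hI i).2.2.le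
  have hM1 : 1 ≤ M := (hI 0).2.1.trans (le_ciSup hbddv 0)
  have hLM : L * M ≤ M := by
    refine le_of_tendsto' (hv.const_mul L) fun N => ?_
    obtain ⟨i, hi, hc⟩ := frequently_atTop.1 (h.frequently_lt hI) N
    calc L * v N ≤ u i * v i :=
          mul_le_mul (ciInf_le hbddu i) (h.monotone hI hi) (by linarith [(hI N).2.1])
            (by linarith [(hI i).1.1])
      _ = v (i + 1) := ((h i).1 hc).2.symm
      _ ≤ M := le_ciSup hbddv (i + 1)
  have hAM : A ≤ L * M := by
    refine ge_of_tendsto' (hu.mul_const M) fun N => ?_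
    obtain ⟨i, hi, hc⟩ := frequently_atTop.1 (h.frequently_ge hI hu1) N
    calc A ≤ u i * v i := hc
      _ ≤ u N * M :=
          mul_le_mul (h.antitone hI hi) (le_ciSup hbddv i) (by linarith [(hI i).2.1])
            (by linarith [(hI N).1.1])
  have hL : L = 1 := by nlinarith
  rw [hL] at hu hAM
  exact ⟨hu, le_antisymm hMA (by linarith) ▸ hv⟩

end SatisfiesUVRecursion

def IsPowRatio (a b : ℕ) (x : ℝ) : Prop :=
  ∃ m : ℤ, ∃ n : ℕ, 0 < n ∧ x * b ^ n = a ^ m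

namespace IsPowRatio

variable {a b : ℕ} {x y : ℝ}

theorem pow_div_pow (hb : b ≠ 0) (m : ℕ) {n : ℕ} (hn : 0 < n) :
    IsPowRatio a b ((a : ℝ) ^ m / b ^ n) :=
  ⟨m, n, hn, by rw [div_mul_cancel₀ _ (pow_ne_zero _ (by exact_mod_cast hb)), zpow_natCast]⟩

theorem mul (ha : a ≠ 0) (hx : IsPowRatio a b x) (hy : IsPowRatio a b y) :
    IsPowRatio a b (x * y) := by
  obtain ⟨m₁, n₁, hn₁, hx⟩ := hx
  obtain ⟨m₂, n₂, hn₂, hy⟩ := hy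
  refine ⟨m₁ + m₂, n₁ + n₂, by omega, ?_⟩
  rw [pow_add, zpow_add₀ (by exact_mod_cast ha), ← hx, ← hy]
  ring

theorem div (ha : a ≠ 0) (hx : IsPowRatio a b x) : IsPowRatio a b (x / a) := by
  obtain ⟨m, n, hn, hx⟩ := hx
  refine ⟨m - 1, n, hn, ?_⟩
  rw [zpow_sub₀ (by exact_mod_cast ha), ← hx, zpow_one]
  ring

theorem ne_one (ha : 0 < a) (hb : 1 < b) (hcop : Nat.Coprime a b) (hx : IsPowRatio a b x) :
    x ≠ 1 := by
  rintro rfl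
  obtain ⟨m, n, hn, hx⟩ := hx
  rw [one_mul] at hx
  have hbn : 1 < b ^ n := Nat.one_lt_pow hn.ne' hb
  rcases le_or_gt m 0 with hm | hm
  · have : (a : ℝ) ^ m ≤ 1 := zpow_le_one_of_nonpos₀ (by exact_mod_cast ha) hm
    have : (1 : ℝ) < b ^ n := by exact_mod_cast hbn
    linarith
  · lift m to ℕ using hm.le
    have heq : b ^ n = a ^ m := by exact_mod_cast hx
    have hcop' : Nat.Coprime (b ^ n) (b ^ n) := by
      simpa [heq] using (Nat.Coprime.pow m n hcop).symm
    rw [Nat.coprime_self] at hcop'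
    omega

end IsPowRatio

section LeastExponent

variable {a b p d : ℕ}

theorem lt_pow_add_of_isLeast (ha : 1 < a) (hcop : Nat.Coprime a b) (hp : 0 < p)
    (hd : IsLeast {k : ℕ | b ^ p ≤ a ^ (p + k)} d) : b ^ p < a ^ (p + d) := by
  refine lt_of_le_of_ne hd.1 fun heq => ?_
  have hdvd : a ∣ b ^ p := heq ▸ dvd_pow_self a (by omega)
  have := (Nat.Coprime.pow_right p hcop).eq_one_of_dvd hdvd
  omega

theorem pow_add_lt_mul_of_isLeast (ha : 0 < a) (hab : a < b) (hp : 0 < p)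
    (hd : IsLeast {k : ℕ | b ^ p ≤ a ^ (p + k)} d) : a ^ (p + d) < a * b ^ p := by
  obtain _ | k := d
  · have : a ^ p < b ^ p := Nat.pow_lt_pow_left hab hp.ne'
    have : b ^ p ≤ a ^ p := hd.1
    omega
  · have hk : a ^ (p + k) < b ^ p := by
      by_contra hle
      have := hd.2 (not_lt.1 hle)
      omega
    rw [← add_assoc, pow_succ, mul_comm]
    exact Nat.mul_lt_mul_of_pos_left hk ha

theorem pow_add_div_pow_mem_Ioo_of_isLeast (ha : 1 < a) (hab : a < b) (hcop : Nat.Coprime a b)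
    (hp : 0 < p) (hd : IsLeast {k : ℕ | b ^ p ≤ a ^ (p + k)} d) :
    (a : ℝ) ^ (p + d) / b ^ p ∈ Set.Ioo 1 (a : ℝ) := by
  have hbp : (0 : ℝ) < b ^ p := pow_pos (Nat.cast_pos.2 (by omega)) p
  rw [Set.mem_Ioo, one_lt_div hbp, div_lt_iff₀ hbp]
  exact ⟨by exact_mod_cast lt_pow_add_of_isLeast ha hcop hp hd,
    by exact_mod_cast pow_add_lt_mul_of_isLeast (by omega) hab hp hd⟩

end LeastExponent

theorem stmt_17_general (a b : ℕ) (ha : 1 < a) (hab : a < b) (hcop : Nat.Coprime a b)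
    (d : ℕ → ℕ) (hd : ∀ p : ℕ, IsLeast {k : ℕ | b ^ p ≤ a ^ (p + k)} (d p))
    (φ : ℕ → ℝ) (hφ : ∀ p : ℕ, φ p = (a : ℝ) ^ (p + d p) / (b : ℝ) ^ p)
    (u v : ℕ → ℝ) (hu0 : u 0 = φ 1) (hv0 : v 0 = φ 1)
    (huv : ∀ i : ℕ,
      (u i * v i < a → u (i + 1) = u i ∧ v (i + 1) = u i * v i) ∧
      ((a : ℝ) ≤ u i * v i → u (i + 1) = (u i * v i) / a ∧ v (i + 1) = v i)) :
    Filter.Tendsto u Filter.atTop (nhds 1) ∧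
      Filter.Tendsto v Filter.atTop (nhds (a : ℝ)) := by
  have huv : SatisfiesUVRecursion a u v := huv
  have hφ1 : φ 1 ∈ Set.Ico 1 (a : ℝ) :=
    Set.Ioo_subset_Ico_self (hφ 1 ▸ pow_add_div_pow_mem_Ioo_of_isLeast ha hab hcop one_pos (hd 1))
  have hφ1_ratio : IsPowRatio a b (φ 1) := hφ 1 ▸ IsPowRatio.pow_div_pow (by omega) _ one_pos
  have ha0 : a ≠ 0 := by omega
  have hratio := huv.forall_of_closed (fun _ _ => IsPowRatio.mul ha0) (fun _ => IsPowRatio.div ha0)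
    (hu0 ▸ hφ1_ratio) (hv0 ▸ hφ1_ratio)
  exact huv.tendsto (huv.mem_Ico (hu0 ▸ hφ1) (hv0 ▸ hφ1))
    fun i => (hratio i).1.ne_one (by omega) (by omega) hcop

theorem stmt_17 (a b : ℕ) (ha : 1 < a) (hab : a < b) (hcop : Nat.Coprime a b)
    (d : ℕ → ℕ) (hd : ∀ p : ℕ, IsLeast {k : ℕ | b ^ p ≤ a ^ (p + k)} (d p))
    (φ : ℕ → ℝ) (hφ : ∀ p : ℕ, φ p = (a : ℝ) ^ (p + d p) / (b : ℝ) ^ p)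
    (F : Set ℝ) (hF : F = Set.range φ)
    (u v : ℕ → ℝ) (hu0 : u 0 = φ 1) (hv0 : v 0 = φ 1)
    (huv : ∀ i : ℕ,
      (u i * v i < a → u (i + 1) = u i ∧ v (i + 1) = u i * v i) ∧
      ((a : ℝ) ≤ u i * v i → u (i + 1) = (u i * v i) / a ∧ v (i + 1) = v i)) :
    Filter.Tendsto u Filter.atTop (nhds 1) ∧
      Filter.Tendsto v Filter.atTop (nhds (a : ℝ)) :=
  stmt_17_general a b ha hab hcop d hd φ hφ u v hu0 hv0 huv
end

section
/- The set F is dense in the closed interval [1, a] of real numbers; that is, the closure of F in ℝ equals the set of real numbers x with 1 ≤ x ≤ a. -/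
/-!
Put `θ = log_a b`; it is irrational because `a` and `b` are coprime. Minimality of `d p` says
`p + d p = ⌈p θ⌉`, so `φ p = a ^ (⌈p θ⌉ - p θ) = a ^ fract (p (-θ))`. The natural multiples of
an irrational number are dense modulo `1` (on the compact circle they are as dense as the
integer multiples), and `x ↦ a ^ x` maps `[0, 1]` continuously onto `[1, a]`.
-/

open Real Set

theorem irrational_logb_natCast_of_coprime {a b : ℕ} (ha : 1 < a) (hb : 1 < b)
    (hab : a.Coprime b) : Irrational (logb a b) := by
  rintro ⟨q, hq⟩
  have hq_pos : 0 < q := by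
    have : (0 : ℝ) < logb a b := logb_pos (by exact_mod_cast ha) (by exact_mod_cast hb)
    exact_mod_cast hq ▸ this
  obtain ⟨m, hm⟩ := Int.eq_ofNat_of_zero_le (Rat.num_nonneg.2 hq_pos.le)
  have hpow : b ^ q.den = a ^ m := by
    have hb' : (b : ℝ) = (a : ℝ) ^ (q : ℝ) := by
      rw [hq, rpow_logb (by positivity) (by exact_mod_cast ha.ne') (by positivity)]
    have : (b : ℝ) ^ q.den = (a : ℝ) ^ m := by
      rw [hb', ← rpow_mul_natCast (by positivity), ← rpow_natCast]
      congr 1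
      have h := Rat.mul_den_eq_num q
      rw [hm] at h
      exact_mod_cast h
    exact_mod_cast this
  have hcop : (a ^ m).Coprime (b ^ q.den) := hab.pow m q.den
  rw [← hpow, Nat.coprime_self, Nat.pow_eq_one] at hcop
  have := q.den_nz
  omega

theorem Real.pow_eq_rpow_mul_logb {a b : ℝ} (ha : 0 < a) (ha₁ : a ≠ 1) (hb : 0 < b) (p : ℕ) :
    b ^ p = a ^ (p * logb a b) := by
  rw [mul_comm, rpow_mul_natCast ha.le, rpow_logb ha ha₁ hb]

theorem Real.pow_le_pow_iff_natCast_mul_logb_le {a b : ℝ} (ha : 1 < a) (hb : 0 < b) (p m : ℕ) :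
    b ^ p ≤ a ^ m ↔ p * logb a b ≤ m := by
  rw [pow_eq_rpow_mul_logb (by positivity) ha.ne' hb, ← rpow_natCast a m,
    rpow_le_rpow_left_iff ha]

theorem isLeast_setOf_le_add_natCast {α : Type*} [Semiring α] [LinearOrder α] [FloorSemiring α]
    (x : α) (n : ℕ) : IsLeast {k : ℕ | x ≤ n + k} (⌈x⌉₊ - n) := by
  have : {k : ℕ | x ≤ n + k} = Ici (⌈x⌉₊ - n) := by
    ext k
    rw [mem_ofPred_eq, mem_Ici, ← Nat.cast_add, ← Nat.ceil_le]
    omega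
  exact this ▸ isLeast_Ici

theorem add_eq_natCeil_of_isLeast {a b p d : ℕ} (ha : 1 < a) (hab : a ≤ b)
    (hd : IsLeast {k | b ^ p ≤ a ^ (p + k)} d) : p + d = ⌈p * logb a b⌉₊ := by
  have ha' : (1 : ℝ) < a := by exact_mod_cast ha
  have hab' : (a : ℝ) ≤ b := by exact_mod_cast hab
  have hset : {k | b ^ p ≤ a ^ (p + k)} = {k : ℕ | p * logb a b ≤ p + k} := by
    ext k
    rw [mem_ofPred_eq, mem_ofPred_eq, ← Nat.cast_le (α := ℝ), Nat.cast_pow, Nat.cast_pow,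
      pow_le_pow_iff_natCast_mul_logb_le ha' (by linarith), Nat.cast_add]
  rw [hset] at hd
  have hp : (p : ℝ) ≤ ⌈p * logb a b⌉₊ := calc
    (p : ℝ) ≤ p * logb a b := le_mul_of_one_le_right p.cast_nonneg
      ((le_logb_iff_rpow_le ha' (by linarith)).2 (by simpa using hab'))
    _ ≤ ⌈p * logb a b⌉₊ := Nat.le_ceil _
  rw [hd.unique (isLeast_setOf_le_add_natCast _ p)]
  have : p ≤ ⌈p * logb a b⌉₊ := by exact_mod_cast hp
  omega

theorem Real.pow_natCeil_div_pow_eq_rpow_fract {a b : ℝ} (ha : 1 < a) (hb : 1 ≤ b) (p : ℕ) :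
    a ^ ⌈p * logb a b⌉₊ / b ^ p = a ^ Int.fract (p * -logb a b) := by
  have hθ : 0 ≤ p * logb a b := mul_nonneg p.cast_nonneg (logb_nonneg ha hb)
  rw [pow_eq_rpow_mul_logb (b := b) (by positivity) ha.ne' (by positivity), ← rpow_natCast,
    ← rpow_sub (by positivity), mul_neg, Int.fract, Int.floor_neg,
    natCast_ceil_eq_intCast_ceil hθ, Int.cast_neg]
  ring_nf

theorem Irrational.Ioo_subset_closure_range_fract_mul {θ : ℝ} (hθ : Irrational θ) :
    Ioo 0 1 ⊆ closure (range fun n : ℕ => Int.fract (n * θ)) := by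
  have hdense : DenseRange fun n : ℕ => n • (θ : AddCircle (1 : ℝ)) :=
    denseRange_zsmul_iff_nsmul.1 (AddCircle.denseRange_zsmul_coe_iff.2 (by rwa [div_one]))
  intro y hy
  rw [_root_.mem_closure_iff]
  intro o ho hyo
  -- The image of `o ∩ (0, 1)` in the circle is open, hence contains some `n • θ`.
  obtain ⟨n, u, ⟨huo, hu⟩, hun⟩ := hdense.exists_mem_open
    (QuotientAddGroup.isOpenMap_coe _ (ho.inter isOpen_Ioo)) ⟨_, y, ⟨hyo, hy⟩, rfl⟩
  refine ⟨u, huo, n, ?_⟩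
  rw [← AddCircle.coe_eq_coe_iff_of_mem_Ico (p := 1) (a := 0)
    ⟨Int.fract_nonneg _, by simpa using Int.fract_lt_one _⟩ ⟨hu.1.le, by simpa using hu.2⟩,
    AddCircle.coe_fract, ← nsmul_eq_mul, AddCircle.coe_nsmul]
  exact hun.symm

theorem Real.closure_image_rpow_eq_Icc {a : ℝ} (ha : 1 < a) {s : Set ℝ} (hs : s ⊆ Icc 0 1)
    (hdense : Ioo 0 1 ⊆ closure s) : closure ((a ^ ·) '' s) = Icc 1 a := by
  refine (closure_minimal ?_ isClosed_Icc).antisymm ?_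
  · rintro _ ⟨x, hx, rfl⟩
    exact ⟨one_le_rpow ha.le (hs hx).1,
      by simpa using rpow_le_rpow_of_exponent_le ha.le (hs hx).2⟩
  · rw [← closure_Ioo ha.ne]
    refine closure_minimal (fun x hx => ?_) isClosed_closure
    have hx₀ : 0 < x := by linarith [hx.1]
    have hlog : logb a x ∈ Ioo 0 1 :=
      ⟨logb_pos ha hx.1, (logb_lt_iff_lt_rpow ha hx₀).2 (by simpa using hx.2)⟩
    have : a ^ logb a x ∈ closure ((a ^ ·) '' s) :=
      image_closure_subset_closure_image (continuous_const_rpow (by positivity))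
        ⟨_, hdense hlog, rfl⟩
    rwa [rpow_logb (by positivity) ha.ne' hx₀] at this

theorem stmt_18 (a b : ℕ) (ha : 1 < a) (hab : a < b) (hcop : Nat.Coprime a b)
    (d : ℕ → ℕ) (hd : ∀ p : ℕ, IsLeast {k : ℕ | b ^ p ≤ a ^ (p + k)} (d p))
    (φ : ℕ → ℝ) (hφ : ∀ p : ℕ, φ p = (a : ℝ) ^ (p + d p) / (b : ℝ) ^ p)
    (F : Set ℝ) (hF : F = Set.range φ) :
    closure F = Set.Icc (1 : ℝ) (a : ℝ) := by
  have ha' : (1 : ℝ) < a := by exact_mod_cast ha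
  have hb' : (1 : ℝ) ≤ b := by exact_mod_cast (ha.trans hab).le
  have hF' : F = ((a : ℝ) ^ ·) '' range fun p : ℕ => Int.fract (p * -logb a b) := by
    rw [hF, ← range_comp]
    congr 1
    funext p
    rw [hφ, add_eq_natCeil_of_isLeast ha hab.le (hd p),
      pow_natCeil_div_pow_eq_rpow_fract ha' hb']
    rfl
  have hθ : Irrational (-logb a b) :=
    (irrational_logb_natCast_of_coprime ha (ha.trans hab) hcop).neg
  rw [hF']
  exact closure_image_rpow_eq_Icc ha'
    (range_subset_iff.2 fun p => ⟨Int.fract_nonneg _, (Int.fract_lt_one _).le⟩)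
    hθ.Ioo_subset_closure_range_fract_mul
end
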